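/- arXiv:2206.04260 — 2 statements merged into one kernel-verified Lean document; each statement's English description precedes it below -/
import Mathlib

section
/- Let S be an a-cap-free and b-cup-free configuration with a slope labeling s. Define α_i(p) as the maximum length of a cup ending at p whose last edge has label ≤ i (and α_i(p) = 1 if no such cup exists). Then for every p, 1 ≤ α_1(p) ≤ α_2(p) ≤ ... ≤ α_{a-2}(p) ≤ b-1, and for any x < y with s(xy) = i we have α_i(x) < α_i(y). Consequently the map p ↦ (α_1(p),...,α_{a-2}(p)) is injective. -/
variable {α : Type*} [LinearOrder α]

/-- Every consecutive triple of the list satisfies `f`. -/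
def Triples (f : α → α → α → Prop) : List α → Prop
  | x :: y :: z :: l => f x y z ∧ Triples f (y :: z :: l)
  | _ => True

/-- `l` is a cup in the configuration `(S, cup)`: a nonempty increasing list of
vertices of `S` all of whose consecutive triples are colored cup. -/
def IsCupIn (S : Finset α) (cup : α → α → α → Prop) (l : List α) : Prop :=
  l ≠ [] ∧ l.Chain' (· < ·) ∧ (∀ x ∈ l, x ∈ S) ∧ Triples cup l

/-- `l` is a cap in the configuration `(S, cup)`. -/
def IsCapIn (S : Finset α) (cup : α → α → α → Prop) (l : List α) : Prop :=
  l ≠ [] ∧ l.Chain' (· < ·) ∧ (∀ x ∈ l, x ∈ S) ∧ Triples (fun x y z => ¬ cup x y z) l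

/-- The configuration has no cap with `a` (or more) vertices. -/
def CapFree (S : Finset α) (cup : α → α → α → Prop) (a : ℕ) : Prop :=
  ∀ l : List α, IsCapIn S cup l → l.length < a

/-- The configuration has no cup with `b` (or more) vertices. -/
def CupFree (S : Finset α) (cup : α → α → α → Prop) (b : ℕ) : Prop :=
  ∀ l : List α, IsCupIn S cup l → l.length < b

def StartsAt (l : List α) (p : α) : Prop := l.head? = some p

def EndsAt (l : List α) (p : α) : Prop := l.getLast? = some p

/-- A weak `(a, b)`-gon: an `a`-cap and a `b`-cup sharing both endpoints. -/
def HasWeakGon (S : Finset α) (cup : α → α → α → Prop) (a b : ℕ) : Prop :=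
  ∃ (A U : List α) (x y : α), IsCapIn S cup A ∧ A.length = a ∧
    IsCupIn S cup U ∧ U.length = b ∧
    StartsAt A x ∧ StartsAt U x ∧ EndsAt A y ∧ EndsAt U y

/-- Two cups from `p` to `r` and from `q` to `s` are interweaved if `p < q ≤ r < s`. -/
def Interweaved (C₁ C₂ : List α) : Prop :=
  ∃ p r q s, StartsAt C₁ p ∧ EndsAt C₁ r ∧ StartsAt C₂ q ∧ EndsAt C₂ s ∧
    p < q ∧ q ≤ r ∧ r < s

/-- A laced `(n-1)`-cup: an `(n-1)`-cup from `p` to `q` together with a cup ending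
at `p` and a cup starting at `q` whose sizes sum to `n - 1`. -/
def IsLacedCup (S : Finset α) (cup : α → α → α → Prop) (n : ℕ) (C : List α) : Prop :=
  IsCupIn S cup C ∧ C.length = n - 1 ∧
  ∃ p q Cp Cq, StartsAt C p ∧ EndsAt C q ∧ IsCupIn S cup Cp ∧ IsCupIn S cup Cq ∧
    EndsAt Cp p ∧ StartsAt Cq q ∧ Cp.length + Cq.length = n - 1

/-- A slope labeling of an `a`-cap-free configuration: labels in `{1, …, a-2}`
such that `s x y ≤ s y z` forces `x y z` to be a cup. -/
def IsSlopeLabeling (S : Finset α) (cup : α → α → α → Prop) (a : ℕ) (s : α → α → ℕ) : Prop :=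
  (∀ x ∈ S, ∀ y ∈ S, x < y → 1 ≤ s x y ∧ s x y ≤ a - 2) ∧
  (∀ x ∈ S, ∀ y ∈ S, ∀ z ∈ S, x < y → y < z → s x y ≤ s y z → cup x y z)

/-- `α_i(p)`: maximum length of a cup ending at `p` with last edge of label `≤ i`
(`1` if there is no such cup). -/
noncomputable def alphaStat (S : Finset α) (cup : α → α → α → Prop) (s : α → α → ℕ)
    (i : ℕ) (p : α) : ℕ :=
  max 1 (sSup {k | ∃ (l : List α) (x : α), IsCupIn S cup l ∧ EndsAt l p ∧
    l.length = k ∧ l.dropLast.getLast? = some x ∧ s x p ≤ i})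

/-- `β(p)`: maximum length of a cup ending at `p` (`1` if there is none). -/
noncomputable def betaStat (S : Finset α) (cup : α → α → α → Prop) (p : α) : ℕ :=
  max 1 (sSup {k | ∃ l : List α, IsCupIn S cup l ∧ EndsAt l p ∧ l.length = k})

/-- The cup coloring of the mirror reflection. -/
def opCup (cup : α → α → α → Prop) : αᵒᵈ → αᵒᵈ → αᵒᵈ → Prop :=
  fun x y z => cup (OrderDual.ofDual z) (OrderDual.ofDual y) (OrderDual.ofDual x)

/-- The vertex set of the mirror reflection. -/
def opSet (S : Finset α) : Finset αᵒᵈ := S.map OrderDual.toDual.toEmbedding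

/-- The mirror reflection of a cap/cup. -/
def opList (l : List α) : List αᵒᵈ := (l.map OrderDual.toDual).reverse

/-!
Appending `y` to a longest cup that ends at `x` with last label at most `s x y` gives a longer
cup ending at `y`: the slope condition makes the new last triple a cup. Hence `α_{s(xy)}`
strictly increases along every edge `xy`, and the labels `s x y` range over `1, …, a - 2`,
so the vector `(α_1, …, α_{a-2})` separates any two points.
-/

theorem Triples.concat {β : Type*} {f : β → β → β → Prop} {y : β} :
    ∀ {l : List β} {w x : β}, l.dropLast.getLast? = some w → l.getLast? = some x →
      Triples f l → f w x y → Triples f (l ++ [y])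
  | [], _, _, _, hx, _, _ => by simp at hx
  | [_], _, _, hw, _, _, _ => by simp at hw
  | [_, _], _, _, hw, hx, _, hf => by
    simp only [List.dropLast_cons_cons, List.dropLast_singleton, List.getLast?_singleton,
      List.getLast?_cons_cons, Option.some.injEq] at hw hx
    subst hw hx
    exact ⟨hf, trivial⟩
  | _ :: b :: c :: t, _, _, hw, hx, ⟨h, hl⟩, hf =>
    ⟨h, Triples.concat (l := b :: c :: t) (by simpa using hw) (by simpa using hx) hl hf⟩

theorem List.IsChain.rel_of_getLast? {β : Type*} {R : β → β → Prop} {l : List β} {w x : β}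
    (h : l.IsChain R) (hw : l.dropLast.getLast? = some w) (hx : l.getLast? = some x) :
    R w x := by
  obtain ⟨l, rfl⟩ := List.getLast?_eq_some_iff.mp hx
  rw [List.dropLast_concat] at hw
  obtain ⟨l, rfl⟩ := List.getLast?_eq_some_iff.mp hw
  exact (List.isChain_append.mp h).2.2 w (by simp) x rfl

section Cups

variable {S : Finset α} {cup : α → α → α → Prop}

theorem isCupIn_pair {x y : α} (hx : x ∈ S) (hy : y ∈ S) (hxy : x < y) :
    IsCupIn S cup [x, y] := by
  refine ⟨by simp, List.isChain_pair.mpr hxy, ?_, trivial⟩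
  simp [hx, hy]

theorem IsCupIn.concat {l : List α} {w x y : α} (hl : IsCupIn S cup l)
    (hw : l.dropLast.getLast? = some w) (hx : l.getLast? = some x) (hy : y ∈ S)
    (hxy : x < y) (hwxy : cup w x y) : IsCupIn S cup (l ++ [y]) := by
  obtain ⟨-, hchain, hmem, htriples⟩ := hl
  refine ⟨by simp, hchain.append (List.isChain_singleton y) ?_, ?_, htriples.concat hw hx hwxy⟩
  · simp_all
  · simpa [or_imp, forall_and] using ⟨hmem, hy⟩

def labeledCupLengths (S : Finset α) (cup : α → α → α → Prop) (s : α → α → ℕ) (i : ℕ)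
    (p : α) : Set ℕ :=
  {k | ∃ (l : List α) (x : α), IsCupIn S cup l ∧ EndsAt l p ∧
    l.length = k ∧ l.dropLast.getLast? = some x ∧ s x p ≤ i}

variable {s : α → α → ℕ}

theorem alphaStat_eq_max_sSup (i : ℕ) (p : α) :
    alphaStat S cup s i p = max 1 (sSup (labeledCupLengths S cup s i p)) := rfl

theorem labeledCupLengths_mono {i j : ℕ} (hij : i ≤ j) (p : α) :
    labeledCupLengths S cup s i p ⊆ labeledCupLengths S cup s j p :=
  fun _ ⟨l, x, hl, hp, hlen, hx, hi⟩ => ⟨l, x, hl, hp, hlen, hx, hi.trans hij⟩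

variable {b : ℕ} (hcup : CupFree S cup b)
include hcup

theorem lt_of_mem_labeledCupLengths {i k : ℕ} {p : α}
    (hk : k ∈ labeledCupLengths S cup s i p) : k < b := by
  obtain ⟨l, -, hl, -, rfl, -⟩ := hk
  exact hcup l hl

theorem bddAbove_labeledCupLengths (i : ℕ) (p : α) :
    BddAbove (labeledCupLengths S cup s i p) :=
  ⟨b, fun _ hk => (lt_of_mem_labeledCupLengths hcup hk).le⟩

theorem alphaStat_mono {i j : ℕ} (hij : i ≤ j) (p : α) :
    alphaStat S cup s i p ≤ alphaStat S cup s j p :=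
  max_le_max le_rfl <|
    csSup_le_csSup' (bddAbove_labeledCupLengths hcup j p) (labeledCupLengths_mono hij p)

theorem alphaStat_le_sub_one (hb : 2 ≤ b) (i : ℕ) (p : α) :
    alphaStat S cup s i p ≤ b - 1 :=
  max_le (by omega) <| csSup_le' fun _ hk => by
    have := lt_of_mem_labeledCupLengths hcup hk
    omega

variable {a : ℕ} (hs : IsSlopeLabeling S cup a s)
include hs

theorem alphaStat_add_one_mem {x y : α} (hx : x ∈ S) (hy : y ∈ S) (hxy : x < y) :
    alphaStat S cup s (s x y) x + 1 ∈ labeledCupLengths S cup s (s x y) y := by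
  rw [alphaStat_eq_max_sSup]
  by_cases hsup : sSup (labeledCupLengths S cup s (s x y) x) ≤ 1
  · rw [max_eq_left hsup]
    exact ⟨[x, y], x, isCupIn_pair hx hy hxy, rfl, rfl, rfl, le_rfl⟩
  have hne : (labeledCupLengths S cup s (s x y) x).Nonempty := by
    by_contra hempty
    rw [Set.not_nonempty_iff_eq_empty.mp hempty, csSup_empty] at hsup
    exact hsup bot_le
  obtain ⟨l, w, hl, hlx, hlen, hw, hwx⟩ := Nat.sSup_mem hne (bddAbove_labeledCupLengths hcup _ x)
  rw [max_eq_right (not_le.mp hsup).le, ← hlen]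
  have hwlt : w < x := hl.2.1.rel_of_getLast? hw hlx
  have hwS : w ∈ S := hl.2.2.1 w (List.dropLast_subset l (List.mem_of_getLast? hw))
  refine ⟨l ++ [y], x, hl.concat hw hlx hy hxy (hs.2 w hwS x hx y hy hwlt hxy hwx),
    List.getLast?_concat, by simp, by rwa [List.dropLast_concat], le_rfl⟩

theorem alphaStat_lt_of_lt {x y : α} (hx : x ∈ S) (hy : y ∈ S) (hxy : x < y) :
    alphaStat S cup s (s x y) x < alphaStat S cup s (s x y) y :=
  Nat.lt_of_succ_le <| (le_csSup (bddAbove_labeledCupLengths hcup _ y)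
    (alphaStat_add_one_mem hcup hs hx hy hxy)).trans (le_max_right _ _)

theorem alphaVector_ne_of_lt {p q : α} (hp : p ∈ S) (hq : q ∈ S) (hpq : p < q) :
    (fun i : Fin (a - 2) => alphaStat S cup s (i.1 + 1) p) ≠
      (fun i : Fin (a - 2) => alphaStat S cup s (i.1 + 1) q) := by
  intro h
  obtain ⟨hpos, hle⟩ := hs.1 p hp q hq hpq
  have hlabel := congrFun h ⟨s p q - 1, by omega⟩
  simp only [Nat.sub_add_cancel hpos] at hlabel
  exact (alphaStat_lt_of_lt hcup hs hp hq hpq).ne hlabel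

end Cups

theorem stmt4_general (a b : ℕ) (hb : 2 ≤ b)
    (S : Finset α) (cup : α → α → α → Prop)
    (hcup : CupFree S cup b)
    (s : α → α → ℕ) (hs : IsSlopeLabeling S cup a s) :
    (∀ p ∈ S, 1 ≤ alphaStat S cup s 1 p ∧
      (∀ i j : ℕ, i ≤ j → alphaStat S cup s i p ≤ alphaStat S cup s j p) ∧
      alphaStat S cup s (a - 2) p ≤ b - 1) ∧
    (∀ x ∈ S, ∀ y ∈ S, x < y →
      alphaStat S cup s (s x y) x < alphaStat S cup s (s x y) y) ∧
    Set.InjOn (fun p => fun i : Fin (a - 2) => alphaStat S cup s (i.1 + 1) p) S := by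
  refine ⟨fun p _ => ⟨le_max_left _ _, fun i j hij => alphaStat_mono hcup hij p,
      alphaStat_le_sub_one hcup hb _ p⟩,
    fun x hx y hy hxy => alphaStat_lt_of_lt hcup hs hx hy hxy, ?_⟩
  intro p hp q hq hpq
  by_contra hne
  rcases lt_or_gt_of_ne hne with h | h
  · exact alphaVector_ne_of_lt hcup hs hp hq h hpq
  · exact alphaVector_ne_of_lt hcup hs hq hp h hpq.symm

theorem stmt4 (a b : ℕ) (ha : 2 ≤ a) (hb : 2 ≤ b)
    (S : Finset α) (cup : α → α → α → Prop)
    (hcap : CapFree S cup a) (hcup : CupFree S cup b)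
    (s : α → α → ℕ) (hs : IsSlopeLabeling S cup a s) :
    (∀ p ∈ S, 1 ≤ alphaStat S cup s 1 p ∧
      (∀ i j : ℕ, i ≤ j → alphaStat S cup s i p ≤ alphaStat S cup s j p) ∧
      alphaStat S cup s (a - 2) p ≤ b - 1) ∧
    (∀ x ∈ S, ∀ y ∈ S, x < y →
      alphaStat S cup s (s x y) x < alphaStat S cup s (s x y) y) ∧
    Set.InjOn (fun p => fun i : Fin (a - 2) => alphaStat S cup s (i.1 + 1) p) S :=
  stmt4_general a b hb S cup hcup s hs
end

section
/- Let n ≥ 3 and let S be a 4-cap-free, n-cup-free configuration of size at least C(n-1,2)+1, with a fixed slope labeling and β(p) defined as the maximum size of a cup in S ending at p (β(p)=1 if none). Then for every i with 1 ≤ i ≤ n-1, the set R_i(S) = {p ∈ S : β(p) = i} is nonempty. -/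
variable {α : Type*} [LinearOrder α]

/-! Write `α₁(p)` for `alphaStat S cup s 1 p`. For `p < q` in `S`, appending `q` to an optimal
cup ending at `p` shows that `α₁(q) > α₁(p)` when `s p q = 1` and `β(q) > β(p)` when `s p q = 2`.
Hence `p ↦ (β(p), α₁(p))` is injective on `S` with `1 ≤ α₁ ≤ β`, so if `β < n - 1` everywhere then
`|S| ≤ 1 + 2 + ⋯ + (n - 2) = C(n - 1, 2)`. Some point therefore has `β ≥ n - 1`. Finally, the
penultimate vertex of an optimal cup ending at `p` has `β ≥ β(p) - 1`, so the leftmost point with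
`β ≥ i` has `β = i`. -/

section Lists

omit [LinearOrder α]

variable {f : α → α → α → Prop}

theorem Triples.left_of_append : ∀ {l₁ l₂ : List α}, Triples f (l₁ ++ l₂) → Triples f l₁
  | [], _, _ | [_], _, _ | [_, _], _, _ => trivial
  | _ :: y :: z :: t, _, h => ⟨h.1, Triples.left_of_append (l₁ := y :: z :: t) h.2⟩

theorem Triples.snoc {x y z : α} (hxyz : f x y z) :
    ∀ {l : List α}, Triples f (l ++ [x, y]) → Triples f (l ++ [x, y, z])
  | [], _ => ⟨hxyz, trivial⟩
  | [_], h => ⟨h.1, hxyz, trivial⟩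
  | [_, _], h => ⟨h.1, h.2.1, hxyz, trivial⟩
  | _ :: v :: w :: t, h => ⟨h.1, Triples.snoc hxyz (l := v :: w :: t) h.2⟩

theorem List.eq_dropLast_dropLast_append_pair {l : List α} {x p : α} (hp : l.getLast? = some p)
    (hx : l.dropLast.getLast? = some x) : l = l.dropLast.dropLast ++ [x, p] :=
  calc l = l.dropLast ++ [p] := (List.dropLast_append_getLast? p hp).symm
    _ = (l.dropLast.dropLast ++ [x]) ++ [p] := by rw [List.dropLast_append_getLast? x hx]
    _ = l.dropLast.dropLast ++ [x, p] := by simp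

end Lists

section Cups

variable {S : Finset α} {cup : α → α → α → Prop} {l : List α} {p q x : α}

theorem isCupIn_singleton (hp : p ∈ S) : IsCupIn S cup [p] :=
  ⟨List.cons_ne_nil p [], List.isChain_singleton p, by simpa using hp, trivial⟩

theorem IsCupIn.length_le_card (hl : IsCupIn S cup l) : l.length ≤ S.card := by
  rw [← List.toFinset_card_of_nodup hl.2.1.pairwise.nodup]
  exact Finset.card_le_card fun y hy => hl.2.2.1 y (List.mem_toFinset.mp hy)

theorem IsCupIn.of_prefix {l₁ : List α} (hl : IsCupIn S cup l) (h : l₁ <+: l) (hne : l₁ ≠ []) :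
    IsCupIn S cup l₁ := by
  obtain ⟨t, rfl⟩ := h
  exact ⟨hne, hl.2.1.sublist (List.sublist_append_left l₁ t),
    fun y hy => hl.2.2.1 y (List.mem_append_left t hy), hl.2.2.2.left_of_append⟩

theorem IsCupIn.penultimate_mem_lt (hl : IsCupIn S cup l) (hp : EndsAt l p)
    (hx : l.dropLast.getLast? = some x) : x ∈ S ∧ x < p := by
  have hsplit := List.eq_dropLast_dropLast_append_pair hp hx
  have hchain : List.IsChain (· < ·) l := hl.2.1
  rw [hsplit, List.isChain_iff_pairwise, List.pairwise_append] at hchain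
  exact ⟨hl.2.2.1 x (by rw [hsplit]; simp), by simpa using hchain.2.1⟩

theorem IsCupIn.snoc (hl : IsCupIn S cup l) (hp : EndsAt l p) (hq : q ∈ S) (hpq : p < q)
    (hcup : ∀ x, l.dropLast.getLast? = some x → cup x p q) : IsCupIn S cup (l ++ [q]) := by
  refine ⟨by simp, List.isChain_append.mpr ⟨hl.2.1, List.isChain_singleton q, ?_⟩, ?_, ?_⟩
  · simpa [show l.getLast? = some p from hp] using hpq
  · simpa [or_imp, forall_and] using ⟨hl.2.2.1, hq⟩
  · rcases hx : l.dropLast.getLast? with _ | x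
    · rw [← List.dropLast_append_getLast? p hp, List.getLast?_eq_none_iff.mp hx]
      trivial
    · have htr := hl.2.2.2
      rw [List.eq_dropLast_dropLast_append_pair hp hx] at htr ⊢
      simpa using htr.snoc (hcup x hx)

end Cups

section Statistics

variable {S : Finset α} {cup : α → α → α → Prop} {s : α → α → ℕ} {l : List α} {p q : α}

theorem IsCupIn.length_le_betaStat (hl : IsCupIn S cup l) (hp : EndsAt l p) :
    l.length ≤ betaStat S cup p := by
  refine le_trans ?_ (le_max_right 1 _)
  exact le_csSup ⟨S.card, fun _ ⟨l', hl', _, hk⟩ => hk ▸ hl'.length_le_card⟩ ⟨l, hl, hp, rfl⟩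

theorem exists_isCupIn_length_eq_betaStat (hp : p ∈ S) :
    ∃ l, IsCupIn S cup l ∧ EndsAt l p ∧ l.length = betaStat S cup p := by
  have hone : 1 ∈ {k | ∃ l, IsCupIn S cup l ∧ EndsAt l p ∧ l.length = k} :=
    ⟨[p], isCupIn_singleton hp, rfl, rfl⟩
  have hbdd : BddAbove {k | ∃ l, IsCupIn S cup l ∧ EndsAt l p ∧ l.length = k} :=
    ⟨S.card, fun _ ⟨l, hl, _, hk⟩ => hk ▸ hl.length_le_card⟩
  rw [betaStat, max_eq_right (le_csSup hbdd hone)]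
  exact Nat.sSup_mem ⟨1, hone⟩ hbdd

theorem IsCupIn.length_le_alphaStat {i : ℕ} {x : α} (hl : IsCupIn S cup l) (hp : EndsAt l p)
    (hx : l.dropLast.getLast? = some x) (hxp : s x p ≤ i) : l.length ≤ alphaStat S cup s i p := by
  refine le_trans ?_ (le_max_right 1 _)
  exact le_csSup ⟨S.card, fun _ ⟨l', _, hl', _, hk, _⟩ => hk ▸ hl'.length_le_card⟩
    ⟨l, x, hl, hp, rfl, hx, hxp⟩

/-- When `alphaStat S cup s i p = 1` the witness is the one-vertex cup `[p]`, which has no last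
edge; this is why the label condition is stated for every penultimate vertex. -/
theorem exists_isCupIn_length_eq_alphaStat (i : ℕ) (hp : p ∈ S) :
    ∃ l, IsCupIn S cup l ∧ EndsAt l p ∧ l.length = alphaStat S cup s i p ∧
      ∀ x, l.dropLast.getLast? = some x → s x p ≤ i := by
  set A := {k | ∃ (l : List α) (x : α), IsCupIn S cup l ∧ EndsAt l p ∧
    l.length = k ∧ l.dropLast.getLast? = some x ∧ s x p ≤ i}
  have hbdd : BddAbove A := ⟨S.card, fun _ ⟨l, _, hl, _, hk, _⟩ => hk ▸ hl.length_le_card⟩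
  rcases A.eq_empty_or_nonempty with hA | hA
  · refine ⟨[p], isCupIn_singleton hp, rfl, ?_, by simp⟩
    show 1 = max 1 (sSup A)
    rw [hA, csSup_empty]
    rfl
  · obtain ⟨l, x, hl, hpl, hlen, hx, hxp⟩ := Nat.sSup_mem hA hbdd
    have htwo : 2 ≤ l.length := by
      have := List.length_dropLast (xs := l)
      have := List.getLast?_eq_none_iff.not.mp (hx ▸ Option.some_ne_none x)
      have := List.length_pos_iff.mpr this
      omega
    refine ⟨l, hl, hpl, ?_, fun y hy => (Option.some_injective _ (hy.symm.trans hx)) ▸ hxp⟩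
    rw [hlen]
    exact (max_eq_right (by omega) : max 1 (sSup A) = sSup A).symm

theorem alphaStat_le_betaStat (i : ℕ) (hp : p ∈ S) : alphaStat S cup s i p ≤ betaStat S cup p := by
  obtain ⟨l, hl, hpl, hlen, -⟩ := exists_isCupIn_length_eq_alphaStat (s := s) i hp
  exact hlen ▸ hl.length_le_betaStat hpl

theorem alphaStat_lt_of_eq {a i : ℕ} (hs : IsSlopeLabeling S cup a s) (hp : p ∈ S) (hq : q ∈ S)
    (hpq : p < q) (hi : s p q = i) : alphaStat S cup s i p < alphaStat S cup s i q := by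
  obtain ⟨l, hl, hpl, hlen, hlabel⟩ := exists_isCupIn_length_eq_alphaStat (s := s) i hp
  have hext : IsCupIn S cup (l ++ [q]) := hl.snoc hpl hq hpq fun x hx =>
    have hxS := hl.penultimate_mem_lt hpl hx
    hs.2 x hxS.1 p hp q hq hxS.2 hpq (hi ▸ hlabel x hx)
  have := hext.length_le_alphaStat List.getLast?_concat (by rw [List.dropLast_concat]; exact hpl)
    hi.le
  simpa [hlen] using this

theorem betaStat_lt_of_forall_le {a : ℕ} (hs : IsSlopeLabeling S cup a s) (hp : p ∈ S)
    (hq : q ∈ S) (hpq : p < q) (hmax : ∀ x ∈ S, x < p → s x p ≤ s p q) :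
    betaStat S cup p < betaStat S cup q := by
  obtain ⟨l, hl, hpl, hlen⟩ := exists_isCupIn_length_eq_betaStat (cup := cup) hp
  have hext : IsCupIn S cup (l ++ [q]) := hl.snoc hpl hq hpq fun x hx =>
    have hxS := hl.penultimate_mem_lt hpl hx
    hs.2 x hxS.1 p hp q hq hxS.2 hpq (hmax x hxS.1 hxS.2)
  simpa [hlen] using hext.length_le_betaStat List.getLast?_concat

theorem exists_lt_betaStat_le_succ (hp : p ∈ S) (htwo : 2 ≤ betaStat S cup p) :
    ∃ y ∈ S, y < p ∧ betaStat S cup p ≤ betaStat S cup y + 1 := by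
  obtain ⟨l, hl, hpl, hlen⟩ := exists_isCupIn_length_eq_betaStat (cup := cup) hp
  have hne : l.dropLast ≠ [] := by
    rw [← List.length_pos_iff, List.length_dropLast]
    omega
  obtain ⟨y, hy⟩ := Option.ne_none_iff_exists'.mp (List.getLast?_eq_none_iff.not.mpr hne)
  obtain ⟨hyS, hyp⟩ := hl.penultimate_mem_lt hpl hy
  have := (hl.of_prefix l.dropLast_prefix hne).length_le_betaStat hy
  rw [List.length_dropLast] at this
  exact ⟨y, hyS, hyp, by omega⟩

end Statistics

theorem card_sigma_range_Icc_one (m : ℕ) :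
    ((Finset.range m).sigma fun b => Finset.Icc 1 b).card = m.choose 2 := by
  rw [Finset.card_sigma, Nat.choose_two_right, ← Finset.sum_range_id]
  exact Finset.sum_congr rfl fun b _ => by simp

section Labeling

variable {S : Finset α} {cup : α → α → α → Prop} {s : α → α → ℕ}

theorem injOn_betaStat_alphaStat (hs : IsSlopeLabeling S cup 4 s) :
    Set.InjOn (fun p => (betaStat S cup p, alphaStat S cup s 1 p)) S := by
  have ne_of_lt : ∀ p ∈ S, ∀ q ∈ S, p < q →
      (betaStat S cup p, alphaStat S cup s 1 p) ≠ (betaStat S cup q, alphaStat S cup s 1 q) := by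
    intro p hp q hq hpq heq
    obtain ⟨hβ, hα⟩ := Prod.mk.inj heq
    obtain ⟨hlow, hhigh⟩ := hs.1 p hp q hq hpq
    obtain hone | htwo : s p q = 1 ∨ s p q = 2 := by omega
    · exact (alphaStat_lt_of_eq hs hp hq hpq hone).ne hα
    · refine (betaStat_lt_of_forall_le hs hp hq hpq fun x hx hxp => ?_).ne hβ
      exact htwo ▸ (hs.1 x hx p hp hxp).2
  intro p hp q hq heq
  rcases lt_trichotomy p q with hpq | rfl | hqp
  · exact absurd heq (ne_of_lt p hp q hq hpq)
  · rfl
  · exact absurd heq.symm (ne_of_lt q hq p hp hqp)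

theorem card_le_choose_of_forall_betaStat_lt (hs : IsSlopeLabeling S cup 4 s) {m : ℕ}
    (hβ : ∀ p ∈ S, betaStat S cup p < m) : S.card ≤ m.choose 2 := by
  rw [← card_sigma_range_Icc_one]
  refine Finset.card_le_card_of_injOn
    (fun p => (⟨betaStat S cup p, alphaStat S cup s 1 p⟩ : Σ _ : ℕ, ℕ)) (fun p hp => ?_)
    (fun p hp q hq heq => injOn_betaStat_alphaStat hs hp hq ?_)
  · have := alphaStat_le_betaStat (cup := cup) (s := s) 1 hp
    have : 1 ≤ alphaStat S cup s 1 p := le_max_left _ _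
    simp only [Finset.coe_sigma, Set.mem_sigma_iff, Finset.coe_range, Set.mem_Iio,
      Finset.coe_Icc, Set.mem_Icc]
    exact ⟨hβ p hp, by omega, by omega⟩
  · simpa using heq

end Labeling

theorem exists_betaStat_eq {S : Finset α} {cup : α → α → α → Prop} {k : ℕ} (hk : 1 ≤ k)
    (h : ∃ x ∈ S, k ≤ betaStat S cup x) : ∃ p ∈ S, betaStat S cup p = k := by
  classical
  set T := S.filter fun x => k ≤ betaStat S cup x
  have hT : T.Nonempty := by simpa [T, Finset.Nonempty] using h
  obtain ⟨hpS, hpk⟩ := Finset.mem_filter.mp (T.min'_mem hT)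
  refine ⟨T.min' hT, hpS, le_antisymm (not_lt.mp fun hlt => ?_) hpk⟩
  obtain ⟨y, hyS, hyp, hy⟩ := exists_lt_betaStat_le_succ (cup := cup) hpS (by omega)
  exact (T.min'_le y (Finset.mem_filter.mpr ⟨hyS, by omega⟩)).not_gt hyp

theorem stmt14_general (n : ℕ) (S : Finset α) (cup : α → α → α → Prop)
    (hcard : Nat.choose (n - 1) 2 + 1 ≤ S.card)
    (s : α → α → ℕ) (hs : IsSlopeLabeling S cup 4 s) :
    ∀ i : ℕ, 1 ≤ i → i ≤ n - 1 → ∃ p ∈ S, betaStat S cup p = i := by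
  intro i hi hin
  refine exists_betaStat_eq hi ?_
  by_contra! hsmall
  have := card_le_choose_of_forall_betaStat_lt hs fun p hp => (hsmall p hp).trans_le hin
  omega

theorem stmt14 (n : ℕ) (hn : 3 ≤ n) (S : Finset α) (cup : α → α → α → Prop)
    (h4 : CapFree S cup 4) (hncf : CupFree S cup n)
    (hcard : Nat.choose (n - 1) 2 + 1 ≤ S.card)
    (s : α → α → ℕ) (hs : IsSlopeLabeling S cup 4 s) :
    ∀ i : ℕ, 1 ≤ i → i ≤ n - 1 → ∃ p ∈ S, betaStat S cup p = i :=
  stmt14_general n S cup hcard s hs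
end
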